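/- arXiv:2301.05127 — 3 statements merged into one kernel-verified Lean document; each statement's English description precedes it below -/
import Mathlib

section
/- The symmetric tridiagonal matrix $T_n$ of size $n$ with diagonal entries $4$ and off-diagonal entries $1$ is invertible, and its inverse entries decay exponentially away from the diagonal: $|(T_n^{-1})_{ij}| \leq C \, q^{|i-j|}$ with $q = 2 - \sqrt{3}$ and a constant $C$ independent of $n$, $i$, $j$. -/
/-- The symmetric tridiagonal matrix with diagonal `4` and off-diagonal `1`. -/
def Tmat (n : ℕ) : Matrix (Fin n) (Fin n) ℝ := fun i j =>
  if (i : ℕ) = (j : ℕ) then 4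
  else if (i : ℕ) + 1 = (j : ℕ) ∨ (j : ℕ) + 1 = (i : ℕ) then 1
  else 0

/-!
`Tmat n` is strictly diagonally dominant, so a discrete maximum principle controls any `x`
with `Tmat n *ᵥ x = b`: at a maximum of `|x p|` one has `4 |x p| ≤ |b p| + 2 |x p|`, whence
`|x| ≤ ‖b‖∞ / 2`. This gives invertibility. For the `k`-th column `x` of the inverse, the
comparison function `φ p = q ^ |p - k| / 2` with `q = 2 - √3` satisfies
`φ (p - 1) + φ (p + 1) = 4 φ p` for `p ≠ k` because `q + q⁻¹ = 4`, and dominates `x` at `k`;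
the maximum principle applied to `|x| - φ` then gives `|x| ≤ φ` everywhere.
-/

open Function Matrix

theorem nonpos_of_two_mul_lt_add {s : Finset ℤ} {e : ℤ → ℝ} (hout : ∀ p ∉ s, e p ≤ 0)
    (hsub : ∀ p ∈ s, 0 < e p → 2 * e p < e (p - 1) + e (p + 1)) (p : ℤ) : e p ≤ 0 := by
  by_contra! hp
  have hps : p ∈ s := by_contra fun h => (hout p h).not_gt hp
  obtain ⟨m, hms, hmax⟩ := s.exists_max_image e ⟨p, hps⟩
  have hm : 0 < e m := hp.trans_le (hmax p hps)
  have hle : ∀ j, e j ≤ e m := fun j => by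
    by_cases hj : j ∈ s
    · exact hmax j hj
    · exact (hout j hj).trans hm.le
  linarith [hsub m hms hm, hle (m - 1), hle (m + 1)]

theorem pow_natAbs_sub_one_add_pow_natAbs_add_one {R : Type*} [CommRing R] {q c : R}
    (hq : 1 + q ^ 2 = c * q) {m : ℤ} (hm : m ≠ 0) :
    q ^ (m - 1).natAbs + q ^ (m + 1).natAbs = c * q ^ m.natAbs := by
  obtain ⟨d, hd⟩ : ∃ d : ℕ, m.natAbs = d + 1 := ⟨m.natAbs - 1, by omega⟩
  have h : ((m - 1).natAbs = d ∧ (m + 1).natAbs = d + 2) ∨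
      ((m - 1).natAbs = d + 2 ∧ (m + 1).natAbs = d) := by omega
  rcases h with ⟨h₁, h₂⟩ | ⟨h₁, h₂⟩ <;> rw [h₁, h₂, hd] <;> linear_combination q ^ d * hq

theorem one_add_two_sub_sqrt_three_sq : 1 + (2 - √3) ^ 2 = 4 * (2 - √3) := by
  linear_combination Real.sq_sqrt (show (0 : ℝ) ≤ 3 by norm_num)

theorem two_sub_sqrt_three_pos : 0 < 2 - √3 :=
  sub_pos.mpr ((Real.sqrt_lt' two_pos).mpr (by norm_num))

theorem four_mul_abs_le_of_add_four_mul_add_eq {a b c d : ℝ} (h : c + 4 * a + d = b) :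
    4 * |a| ≤ |b| + |c| + |d| := by
  rw [← h]
  cases abs_cases a <;> cases abs_cases (c + 4 * a + d) <;> cases abs_cases c <;>
    cases abs_cases d <;> linarith

section MaximumPrinciple

variable {s : Finset ℤ} {x b : ℤ → ℝ} {β : ℝ}

theorem abs_le_half_of_forall_add_four_mul_add_eq (hx : ∀ p ∉ s, x p = 0)
    (hrow : ∀ p ∈ s, x (p - 1) + 4 * x p + x (p + 1) = b p) (hβ : 0 ≤ β)
    (hb : ∀ p ∈ s, |b p| ≤ β) (p : ℤ) : |x p| ≤ β / 2 := by
  have key := nonpos_of_two_mul_lt_add (s := s) (e := fun p => |x p| - β / 2)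
    (fun p hp => by simp [hx p hp]; positivity) (fun p hp hpos => ?_) p
  · linarith
  linarith [four_mul_abs_le_of_add_four_mul_add_eq (hrow p hp), hb p hp]

theorem abs_le_half_mul_pow_of_forall_add_four_mul_add_eq {k : ℤ} (hx : ∀ p ∉ s, x p = 0)
    (hrow : ∀ p ∈ s, x (p - 1) + 4 * x p + x (p + 1) = b p) (hβ : 0 ≤ β)
    (hb : ∀ p ∈ s, |b p| ≤ β) (hbk : ∀ p ∈ s, p ≠ k → b p = 0) (p : ℤ) :
    |x p| ≤ β / 2 * (2 - √3) ^ (p - k).natAbs := by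
  set φ : ℤ → ℝ := fun p => β / 2 * (2 - √3) ^ (p - k).natAbs
  have hφ : ∀ p, 0 ≤ φ p := fun p => by have := two_sub_sqrt_three_pos; positivity
  have key := nonpos_of_two_mul_lt_add (s := s) (e := fun p => |x p| - φ p)
    (fun p hp => by simp [hx p hp, hφ]) (fun p hp (hpos : 0 < |x p| - φ p) => ?_) p
  · exact sub_nonpos.mp key
  have hpk : p ≠ k := by
    rintro rfl
    have := abs_le_half_of_forall_add_four_mul_add_eq hx hrow hβ hb p
    simp only [φ, sub_self, Int.natAbs_zero, pow_zero, mul_one] at hpos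
    linarith
  have hφp : φ (p - 1) + φ (p + 1) = 4 * φ p := by
    simp only [φ, show p - 1 - k = (p - k) - 1 by ring, show p + 1 - k = (p - k) + 1 by ring,
      ← mul_add, pow_natAbs_sub_one_add_pow_natAbs_add_one one_add_two_sub_sqrt_three_sq
        (sub_ne_zero.mpr hpk)]
    ring
  have h₄ := four_mul_abs_le_of_add_four_mul_add_eq (hrow p hp)
  rw [hbk p hp hpk, abs_zero] at h₄
  show 2 * (|x p| - φ p) < |x (p - 1)| - φ (p - 1) + (|x (p + 1)| - φ (p + 1))
  linarith

end MaximumPrinciple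

section ZeroExtend

variable {n : ℕ} {M : Type*}

noncomputable def zeroExtend [Zero M] (x : Fin n → M) : ℤ → M :=
  extend (fun i : Fin n => (i : ℤ)) x 0

theorem zeroExtend_coe [Zero M] (x : Fin n → M) (i : Fin n) : zeroExtend x i = x i :=
  (Nat.cast_injective.comp Fin.val_injective).extend_apply _ _ _

theorem zeroExtend_of_notMem [Zero M] (x : Fin n → M) (p : ℤ)
    (hp : p ∉ Finset.univ.image ((↑) : Fin n → ℤ)) : zeroExtend x p = 0 :=
  extend_apply' _ _ _ (by simpa using hp)

theorem sum_ite_coe_eq [AddCommMonoid M] (x : Fin n → M) (c : ℤ) :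
    ∑ j : Fin n, (if (j : ℤ) = c then x j else 0) = zeroExtend x c := by
  by_cases hc : c ∈ Finset.univ.image ((↑) : Fin n → ℤ)
  · obtain ⟨i, -, rfl⟩ := Finset.mem_image.mp hc
    simp [Fin.val_inj, zeroExtend_coe]
  · rw [zeroExtend_of_notMem x c hc]
    exact Finset.sum_eq_zero fun j _ => if_neg fun h => hc (by simp [← h])

end ZeroExtend

theorem zeroExtend_Tmat_mulVec {n : ℕ} (x : Fin n → ℝ) {p : ℤ}
    (hp : p ∈ Finset.univ.image ((↑) : Fin n → ℤ)) :
    zeroExtend x (p - 1) + 4 * zeroExtend x p + zeroExtend x (p + 1) =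
      zeroExtend (Tmat n *ᵥ x) p := by
  obtain ⟨i, -, rfl⟩ := Finset.mem_image.mp hp
  have hentry : ∀ j : Fin n, Tmat n i j * x j = (if (j : ℤ) = i - 1 then x j else 0) +
      4 * (if (j : ℤ) = i then x j else 0) + (if (j : ℤ) = i + 1 then x j else 0) := by
    intro j
    unfold Tmat
    split_ifs <;> first | omega | ring
  rw [zeroExtend_coe (Tmat n *ᵥ x), mulVec.eq_1, dotProduct,
    Finset.sum_congr rfl fun j _ => hentry j, Finset.sum_add_distrib, Finset.sum_add_distrib,
    ← Finset.mul_sum, sum_ite_coe_eq, sum_ite_coe_eq, sum_ite_coe_eq]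

theorem Tmat_det_ne_zero (n : ℕ) : (Tmat n).det ≠ 0 := by
  intro hdet
  obtain ⟨v, hv, hTv⟩ := exists_mulVec_eq_zero_iff.mpr hdet
  refine hv (funext fun i => abs_nonpos_iff.mp ?_)
  have hb : ∀ p ∈ Finset.univ.image ((↑) : Fin n → ℤ), |zeroExtend (Tmat n *ᵥ v) p| ≤ 0 := by
    intro p hp
    obtain ⟨i, -, rfl⟩ := Finset.mem_image.mp hp
    simp [zeroExtend_coe, hTv]
  simpa [zeroExtend_coe] using abs_le_half_of_forall_add_four_mul_add_eq
    (zeroExtend_of_notMem v) (fun p hp => zeroExtend_Tmat_mulVec v hp) le_rfl hb i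

theorem abs_Tmat_inv_apply_le {n : ℕ} (i j : Fin n) :
    |(Tmat n)⁻¹ i j| ≤ 1 / 2 * (2 - √3) ^ ((i : ℤ) - j).natAbs := by
  set x := (Tmat n)⁻¹ *ᵥ Pi.single j 1
  have hTx : Tmat n *ᵥ x = Pi.single j 1 := by
    rw [mulVec_mulVec, mul_nonsing_inv _ (isUnit_iff_ne_zero.mpr (Tmat_det_ne_zero n)),
      one_mulVec]
  have hb : ∀ p ∈ Finset.univ.image ((↑) : Fin n → ℤ), |zeroExtend (Tmat n *ᵥ x) p| ≤ 1 := by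
    intro p hp
    obtain ⟨i, -, rfl⟩ := Finset.mem_image.mp hp
    rw [zeroExtend_coe, hTx, Pi.single_apply]
    split_ifs <;> simp
  have hbk : ∀ p ∈ Finset.univ.image ((↑) : Fin n → ℤ), p ≠ j →
      zeroExtend (Tmat n *ᵥ x) p = 0 := by
    intro p hp hpj
    obtain ⟨i, -, rfl⟩ := Finset.mem_image.mp hp
    rw [zeroExtend_coe, hTx, Pi.single_eq_of_ne (by rintro rfl; exact hpj rfl)]
  have := abs_le_half_mul_pow_of_forall_add_four_mul_add_eq (zeroExtend_of_notMem x)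
    (fun p hp => zeroExtend_Tmat_mulVec x hp) zero_le_one hb hbk i
  simpa [x, zeroExtend_coe, mulVec_single_one] using this

/-- The tridiagonal matrix tridiag(1,4,1) is invertible and the entries of its
inverse decay exponentially away from the diagonal with rate 2 - √3, with a
constant independent of the size and of the indices. -/
theorem tridiag_inverse_decay :
    (∀ n : ℕ, IsUnit (Tmat n).det) ∧
    ∃ C : ℝ, 0 < C ∧ ∀ n : ℕ, ∀ i j : Fin n,
      |(Tmat n)⁻¹ i j| ≤ C * (2 - Real.sqrt 3) ^ ((i : ℤ) - (j : ℤ)).natAbs :=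
  ⟨fun n => isUnit_iff_ne_zero.mpr (Tmat_det_ne_zero n),
    1 / 2, by norm_num, fun _ => abs_Tmat_inv_apply_le⟩
end

section
/- Exact splitting-step velocity update: suppose $\Psi' = -a\Psi - bg$ and $v' = -\frac{1}{\rho}(\frac{1}{k}g + \Psi)$ on $[t_n, t_{n+1}]$ with constants $a = d/k + \alpha > 0$, $b = d/k^2$, $g$, $\rho > 0$, $k > 0$. Then $v(t_{n+1}) = v(t_n) + \frac{1}{\rho} \frac{k}{d + \alpha k}\big(\Psi(t_{n+1}) - \Psi(t_n)\big) - \frac{\Delta t}{\rho} \frac{\alpha}{d + \alpha k} g$. -/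
/-!
Eliminating `Ψ` through its own equation, `Ψ = -(Ψ' + b g) / a`, turns the velocity equation into
`v' = c Ψ' + e` with constants `c = k / (ρ (d + α k))` and `e = -α g / (ρ (d + α k))`,
which integrates exactly over `[t₀, t₁]`.
-/

open Set

theorem sub_eq_smul_sub_add_of_hasDerivAt {E : Type*} [NormedAddCommGroup E] [NormedSpace ℝ E]
    {f g g' : ℝ → E} {a b c : ℝ} {e : E} (hab : a ≤ b)
    (hg : ∀ t ∈ Icc a b, HasDerivAt g (g' t) t)
    (hf : ∀ t ∈ Icc a b, HasDerivAt f (c • g' t + e) t) :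
    f b - f a = c • (g b - g a) + (b - a) • e := by
  set F : ℝ → E := f - c • g - fun t => t • e
  have hF : ∀ t ∈ Icc a b, HasDerivAt F 0 t := fun t ht => by
    simpa using ((hf t ht).sub ((hg t ht).const_smul c)).sub ((hasDerivAt_id' t).smul_const e)
  have hFab : F b = F a :=
    constant_of_has_deriv_right_zero (fun t ht => (hF t ht).continuousAt.continuousWithinAt)
      (fun t ht => (hF t (mem_Icc_of_Ico ht)).hasDerivWithinAt) b (right_mem_Icc.mpr hab)
  simp only [F, Pi.sub_apply, Pi.smul_apply] at hFab
  linear_combination (norm := module) hFab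

theorem pml_velocity_rhs_eq {d α k ρ g ψ : ℝ} (hk : k ≠ 0) (ha : d / k + α ≠ 0) :
    -(1 / ρ) * ((1 / k) * g + ψ) =
      (1 / ρ) * (k / (d + α * k)) * (-(d / k + α) * ψ - d / k ^ 2 * g)
        + -(1 / ρ) * (α / (d + α * k)) * g := by
  have hdk : d + k * α ≠ 0 := by
    rw [show d + k * α = k * (d / k + α) by field_simp]
    exact mul_ne_zero hk ha
  field_simp
  ring

theorem pml_velocity_update_general (d α k ρ g t0 t1 Δt : ℝ)
    (hk : 0 < k) (ha : 0 < d / k + α)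
    (ht : t0 ≤ t1) (hΔt : Δt = t1 - t0) (Ψ v : ℝ → ℝ)
    (hΨ : ∀ t ∈ Set.Icc t0 t1,
      HasDerivAt Ψ (-(d / k + α) * Ψ t - d / k ^ 2 * g) t)
    (hv : ∀ t ∈ Set.Icc t0 t1,
      HasDerivAt v (-(1 / ρ) * ((1 / k) * g + Ψ t)) t) :
    v t1 = v t0 + (1 / ρ) * (k / (d + α * k)) * (Ψ t1 - Ψ t0)
      - (Δt / ρ) * (α / (d + α * k)) * g := by
  have hv' : ∀ t ∈ Icc t0 t1, HasDerivAt v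
      ((1 / ρ) * (k / (d + α * k)) * (-(d / k + α) * Ψ t - d / k ^ 2 * g)
        + -(1 / ρ) * (α / (d + α * k)) * g) t := fun t htI => by
    rw [← pml_velocity_rhs_eq hk.ne' ha.ne']
    exact hv t htI
  have hint := sub_eq_smul_sub_add_of_hasDerivAt ht hΨ hv'
  simp only [smul_eq_mul] at hint
  rw [hΔt]
  linear_combination hint

/-- Exact splitting-step velocity update for subsystem (A) of the ADE-PML: if
Ψ' = -aΨ - b·g and v' = -(1/ρ)((1/k)g + Ψ) with a = d/k + α > 0, b = d/k²,
frozen stress gradient g, ρ > 0, k > 0, then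
v(t₁) = v(t₀) + (1/ρ)·k/(d+αk)·(Ψ(t₁) - Ψ(t₀)) - (Δt/ρ)·α/(d+αk)·g. -/
theorem pml_velocity_update (d α k ρ g t0 t1 Δt : ℝ)
    (hk : 0 < k) (hρ : 0 < ρ) (ha : 0 < d / k + α)
    (ht : t0 ≤ t1) (hΔt : Δt = t1 - t0) (Ψ v : ℝ → ℝ)
    (hΨ : ∀ t ∈ Set.Icc t0 t1,
      HasDerivAt Ψ (-(d / k + α) * Ψ t - d / k ^ 2 * g) t)
    (hv : ∀ t ∈ Set.Icc t0 t1,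
      HasDerivAt v (-(1 / ρ) * ((1 / k) * g + Ψ t)) t) :
    v t1 = v t0 + (1 / ρ) * (k / (d + α * k)) * (Ψ t1 - Ψ t0)
      - (Δt / ρ) * (α / (d + α * k)) * g :=
  pml_velocity_update_general d α k ρ g t0 t1 Δt hk ha ht hΔt Ψ v hΨ hv
end

section
/- Truncation error of the exponential Euler scheme: if $\Psi' = -a\Psi - b g(t)$ with $a > 0$ and $g$ continuously differentiable with $|g'(t)| \leq G$ on $[t_n, t_{n+1}]$, then the exponential Euler approximation $\tilde\Psi = e^{-a\Delta t}\Psi(t_n) - b\frac{1 - e^{-a\Delta t}}{a} g(t_n)$ satisfies $|\Psi(t_{n+1}) - \tilde\Psi| \leq \frac{|b| G \Delta t^2}{2}$. -/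
/-! Run the exponential Euler step for time `t - t₀`; it solves the equation with the forcing
frozen at `g t₀`, so its gap `y` to the exact solution satisfies `y' = -a y - b (g t - g t₀)`,
`y t₀ = 0`, and by the mean value theorem the forcing is at most `|b| G (t - t₀)`.  For
`e^{a (t - t₀)} y` the damping disappears, and as `a ≥ 0` the weight is largest at `t₁`, so
comparison with `|b| G (t - t₀)² / 2` gives a bound independent of `a`. -/

open Real Set

theorem norm_le_of_hasDerivAt_neg_smul_add {E : Type*} [NormedAddCommGroup E] [NormedSpace ℝ E]
    {a t₀ t₁ : ℝ} {y f : ℝ → E} {B B' : ℝ → ℝ} (ha : 0 ≤ a)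
    (hy : ∀ t ∈ Icc t₀ t₁, HasDerivAt y (-a • y t + f t) t)
    (hB : ∀ t, HasDerivAt B (B' t) t) (hf : ∀ t ∈ Ico t₀ t₁, ‖f t‖ ≤ B' t) (ht : t₀ ≤ t₁) :
    ‖y t₁‖ ≤ exp (-a * (t₁ - t₀)) * ‖y t₀‖ + (B t₁ - B t₀) := by
  set w : ℝ → ℝ := fun t => exp (a * (t - t₀))
  have hw : ∀ t, HasDerivAt w (a * w t) t := fun t =>
    ((((hasDerivAt_id t).sub_const t₀).const_mul a).exp).congr_deriv (by simp [w, mul_comm])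
  have hu : ∀ t ∈ Icc t₀ t₁, HasDerivAt (fun t => w t • y t) (w t • f t) t := fun t htI =>
    ((hw t).smul (hy t htI)).congr_deriv (by module)
  have hbound : ∀ t ∈ Ico t₀ t₁, ‖w t • f t‖ ≤ w t₁ * B' t := fun t htI => by
    have hwt : w t ≤ w t₁ := exp_le_exp.2 (by nlinarith [htI.2.le])
    rw [norm_smul, norm_of_nonneg (exp_pos _).le]
    exact mul_le_mul hwt (hf t htI) (norm_nonneg _) (exp_pos _).le
  have hfence := image_norm_le_of_norm_deriv_right_le_deriv_boundary
    (B := fun t => ‖y t₀‖ + w t₁ * (B t - B t₀))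
    (fun t htI => (hu t htI).continuousAt.continuousWithinAt)
    (fun t htI => (hu t (Ico_subset_Icc_self htI)).hasDerivWithinAt)
    (by simp [w]) (fun t => ((hB t).sub_const _).const_mul _ |>.const_add _) hbound
    (right_mem_Icc.2 ht)
  have hw₁ : exp (-a * (t₁ - t₀)) * w t₁ = 1 := by
    rw [← exp_add]; simp
  rw [norm_smul, norm_of_nonneg (exp_pos _).le] at hfence
  calc ‖y t₁‖ = exp (-a * (t₁ - t₀)) * (w t₁ * ‖y t₁‖) := by rw [← mul_assoc, hw₁, one_mul]
    _ ≤ exp (-a * (t₁ - t₀)) * (‖y t₀‖ + w t₁ * (B t₁ - B t₀)) := by gcongr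
    _ = exp (-a * (t₁ - t₀)) * ‖y t₀‖ + (B t₁ - B t₀) := by
        rw [mul_add, ← mul_assoc, hw₁, one_mul]

/-- Exponential Euler step of length `Δt` for `Ψ' = -a Ψ - b g` from `Ψ = ψ`, with `g` frozen
at `γ`. -/
noncomputable def expEulerStep (a b Δt ψ γ : ℝ) : ℝ :=
  exp (-a * Δt) * ψ - b * ((1 - exp (-a * Δt)) / a) * γ

theorem hasDerivAt_expEulerStep {a : ℝ} (ha : a ≠ 0) (b ψ γ t₀ t : ℝ) :
    HasDerivAt (fun t => expEulerStep a b (t - t₀) ψ γ)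
      (-a * expEulerStep a b (t - t₀) ψ γ - b * γ) t := by
  have hexp : HasDerivAt (fun t => exp (-a * (t - t₀))) (-a * exp (-a * (t - t₀))) t :=
    ((((hasDerivAt_id t).sub_const t₀).const_mul (-a)).exp).congr_deriv (by simp [mul_comm])
  refine ((hexp.mul_const ψ).sub
    (((hexp.const_sub 1).div_const a).const_mul b |>.mul_const γ)).congr_deriv ?_
  simp only [expEulerStep]
  field_simp
  ring

theorem exponential_euler_truncation_error_general (a b G t0 t1 Δt : ℝ) (ha : 0 < a)
    (ht : t0 ≤ t1) (hΔt : Δt = t1 - t0) (Ψ g g' : ℝ → ℝ)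
    (hg : ∀ t ∈ Set.Icc t0 t1, HasDerivAt g (g' t) t)
    (hG : ∀ t ∈ Set.Icc t0 t1, |g' t| ≤ G)
    (hODE : ∀ t ∈ Set.Icc t0 t1, HasDerivAt Ψ (-a * Ψ t - b * g t) t) :
    |Ψ t1 - (Real.exp (-a * Δt) * Ψ t0 - b * ((1 - Real.exp (-a * Δt)) / a) * g t0)|
      ≤ |b| * G * Δt ^ 2 / 2 := by
  subst hΔt
  have hmvt : ∀ t ∈ Icc t0 t1, |g t - g t0| ≤ G * (t - t0) :=
    norm_image_sub_le_of_norm_deriv_le_segment' (fun t htI => (hg t htI).hasDerivWithinAt)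
      (fun t htI => hG t (Ico_subset_Icc_self htI))
  have herror : ∀ t ∈ Icc t0 t1,
      HasDerivAt (fun t => Ψ t - expEulerStep a b (t - t0) (Ψ t0) (g t0))
        (-a • (Ψ t - expEulerStep a b (t - t0) (Ψ t0) (g t0)) + -b * (g t - g t0)) t :=
    fun t htI => ((hODE t htI).sub (hasDerivAt_expEulerStep ha.ne' b (Ψ t0) (g t0) t0 t)).congr_deriv
      (by rw [smul_eq_mul]; ring)
  have hB : ∀ t, HasDerivAt (fun t => |b| * G * (t - t0) ^ 2 / 2) (|b| * (G * (t - t0))) t :=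
    fun t => (((((hasDerivAt_id t).sub_const t0).pow 2).const_mul (|b| * G)).div_const 2).congr_deriv
      (by simp; ring)
  have hgap := norm_le_of_hasDerivAt_neg_smul_add ha.le herror hB
    (fun t htI => by
      rw [norm_mul, norm_neg]
      exact mul_le_mul_of_nonneg_left (hmvt t (Ico_subset_Icc_self htI)) (abs_nonneg b)) ht
  simpa [expEulerStep] using hgap

/-- Truncation error of the exponential Euler scheme: for Ψ' = -aΨ - b·g(t)
with a > 0 and g continuously differentiable with |g'| ≤ G on the step, the
exponential Euler approximation has error at most |b|·G·Δt²/2, uniformly in a. -/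
theorem exponential_euler_truncation_error (a b G t0 t1 Δt : ℝ) (ha : 0 < a)
    (ht : t0 ≤ t1) (hΔt : Δt = t1 - t0) (Ψ g g' : ℝ → ℝ)
    (hg : ∀ t ∈ Set.Icc t0 t1, HasDerivAt g (g' t) t)
    (hg'cont : ContinuousOn g' (Set.Icc t0 t1))
    (hG : ∀ t ∈ Set.Icc t0 t1, |g' t| ≤ G)
    (hODE : ∀ t ∈ Set.Icc t0 t1, HasDerivAt Ψ (-a * Ψ t - b * g t) t) :
    |Ψ t1 - (Real.exp (-a * Δt) * Ψ t0 - b * ((1 - Real.exp (-a * Δt)) / a) * g t0)|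
      ≤ |b| * G * Δt ^ 2 / 2 :=
  exponential_euler_truncation_error_general a b G t0 t1 Δt ha ht hΔt Ψ g g' hg hG hODE
end
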